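/- For the block language L over Σ_I = {0,1,#} and Σ_O = {0,1,*}: Player O wins the delay game Γ_f(L) for every unbounded delay function f. -/

import Mathlib

/-- `listPrefix u i` is the concatenation `u 0 ++ u 1 ++ ⋯ ++ u (i-1)`. -/
def listPrefix {A : Type*} (u : ℕ → List A) : ℕ → List A
  | 0 => []
  | n + 1 => listPrefix u n ++ u n

/-- The infinite word obtained by concatenating the blocks `u 0, u 1, u 2, …`
(well-defined on position `n` as soon as some finite concatenation has length `> n`). -/
noncomputable def flattenInf {A : Type*} [Nonempty A] (u : ℕ → List A) (n : ℕ) : A :=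
  letI := Classical.dec (∃ k, n < (listPrefix u k).length)
  if h : ∃ k, n < (listPrefix u k).length then
    (listPrefix u h.choose).getD n (Classical.arbitrary A)
  else Classical.arbitrary A

/-- A delay function maps each round to a positive number of letters. -/
def IsDelay (f : ℕ → ℕ) : Prop := ∀ i, 1 ≤ f i

/-- A delay function is bounded if `f i = 1` for almost all `i`. -/
def BoundedDelay (f : ℕ → ℕ) : Prop := ∃ N, ∀ i, N ≤ i → f i = 1

/-- A delay function is constant if `f i = 1` for all `i > 0`. -/
def ConstantDelay (f : ℕ → ℕ) : Prop := ∀ i, 0 < i → f i = 1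

/-- Player O wins the delay game `Γ_f(L)`: she has a strategy `τO` (mapping the
concatenation `u 0 ⋯ u i` of Player I's moves so far to her next letter) such that
every play consistent with it has its outcome in `L`. -/
def OWinsDelay {I O : Type*} [Nonempty I] (f : ℕ → ℕ) (L : Set (ℕ → I × O)) : Prop :=
  ∃ τO : List I → O,
    ∀ (u : ℕ → List I) (v : ℕ → O),
      (∀ i, (u i).length = f i) →
      (∀ i, v i = τO (listPrefix u (i + 1))) →
      (fun n => (flattenInf u n, v n)) ∈ L

/-- Player I wins the delay game `Γ_f(L)`: he has a strategy `τI` (mapping Player O's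
moves so far to his next word, of length prescribed by `f`) such that the outcome of
every play consistent with it is not in `L`. -/
def IWinsDelay {I O : Type*} [Nonempty I] (f : ℕ → ℕ) (L : Set (ℕ → I × O)) : Prop :=
  ∃ τI : List O → List I,
    (∀ w, (τI w).length = f w.length) ∧
    ∀ (u : ℕ → List I) (v : ℕ → O),
      (∀ i, u i = τI (List.ofFn fun j : Fin i => v j)) →
      (fun n => (flattenInf u n, v n)) ∉ L

/-- The input alphabet `{0, 1, #}`. -/
inductive InL where
  | zero | one | hash
deriving DecidableEq

instance : Fintype InL := ⟨{.zero, .one, .hash}, fun x => by cases x <;> simp⟩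

/-- The output alphabet `{0, 1, *}`. -/
inductive OutL where
  | zero | one | star
deriving DecidableEq

instance : Fintype OutL := ⟨{.zero, .one, .star}, fun x => by cases x <;> simp⟩

instance : Nonempty InL := ⟨.hash⟩
instance : Nonempty OutL := ⟨.star⟩

/-- The letter `0` or `1` of the input alphabet corresponding to a bit. -/
def bitIn : Bool → InL := fun b => if b then .one else .zero

/-- The letter `0` or `1` of the output alphabet corresponding to a bit. -/
def bitOut : Bool → OutL := fun b => if b then .one else .zero

/-- An input letter is a bit, i.e. `0` or `1`. -/
def IsBit (a : InL) : Prop := a = .zero ∨ a = .one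

/-- `α` has an input block (a word `#w` with `w ∈ {0,1}⁺`) of length `n` starting at
position `i`. -/
def InputBlockAt (α : ℕ → InL) (i n : ℕ) : Prop :=
  2 ≤ n ∧ α i = .hash ∧ ∀ j, 1 ≤ j → j < n → IsBit (α (i + j))

/-- `γ` has an output block `(#,a_n)(a_1,*)(a_2,*)⋯(a_{n-1},*)(a_n,a_n)` of length `n+1`
starting at position `i` (here the block length is `n`, so `2 ≤ n`). -/
def OutputBlockAt (γ : ℕ → InL × OutL) (i n : ℕ) : Prop :=
  2 ≤ n ∧ ∃ b : Bool,
    (γ i).1 = .hash ∧ (γ i).2 = bitOut b ∧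
    (∀ j, 1 ≤ j → j < n - 1 → IsBit (γ (i + j)).1 ∧ (γ (i + j)).2 = .star) ∧
    γ (i + (n - 1)) = (bitIn b, bitOut b)

/-- The block language `L`: if the first component contains infinitely many `#` and
arbitrarily long input blocks, then the word contains arbitrarily long output blocks. -/
def BlockLang : Set (ℕ → InL × OutL) :=
  { γ | ((∀ N, ∃ i, N ≤ i ∧ (γ i).1 = .hash) ∧
          (∀ n, ∃ i m, n ≤ m ∧ InputBlockAt (fun k => (γ k).1) i m)) →
        ∀ n, ∃ i m, n ≤ m ∧ OutputBlockAt γ i m }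

/-! ### Auxiliary development for Player O's strategy -/

attribute [local instance 0] Classical.propDecidable

namespace BlockProof

/-- The bit value of an input letter. -/
def bitVal : InL → Bool
  | .one => true
  | _ => false

lemma bitIn_bitVal {a : InL} (h : IsBit a) : bitIn (bitVal a) = a := by
  rcases h with h | h <;> subst h <;> rfl

lemma not_isBit_hash : ¬ IsBit InL.hash := by
  rintro (h | h) <;> exact InL.noConfusion h

/-- Total number of input letters revealed after rounds `0, …, k-1`. -/
def Sf (f : ℕ → ℕ) (k : ℕ) : ℕ := ∑ j ∈ Finset.range k, f j

lemma Sf_succ (f : ℕ → ℕ) (k : ℕ) : Sf f (k + 1) = Sf f k + f k :=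
  Finset.sum_range_succ f k

lemma Sf_mono (f : ℕ → ℕ) : Monotone (Sf f) := fun _ _ h =>
  Finset.sum_le_sum_of_subset (Finset.range_subset_range.2 h)

lemma le_Sf (f : ℕ → ℕ) (hf : IsDelay f) (k : ℕ) : k ≤ Sf f k := by
  induction k with
  | zero => simp [Sf]
  | succ n ih => rw [Sf_succ]; have := hf n; omega

lemma Sf_strictMono (f : ℕ → ℕ) (hf : IsDelay f) : StrictMono (Sf f) :=
  strictMono_nat_of_lt_succ fun n => by rw [Sf_succ]; have := hf n; omega

/-- The lookahead available to Player O at round `i`. -/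
def Lh (f : ℕ → ℕ) (i : ℕ) : ℕ := ∑ j ∈ Finset.range (i + 1), (f j - 1)

lemma Lh_mono (f : ℕ → ℕ) : Monotone (Lh f) := fun _ _ h =>
  Finset.sum_le_sum_of_subset (Finset.range_subset_range.2 (by omega))

lemma Sf_eq_Lh {f : ℕ → ℕ} (hf : IsDelay f) (i : ℕ) :
    Sf f (i + 1) = (i + 1) + Lh f i := by
  induction i with
  | zero =>
    have h1 : Sf f (0 + 1) = f 0 := by simp [Sf]
    have h2 : Lh f 0 = f 0 - 1 := by simp [Lh]
    have := hf 0
    omega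
  | succ n ih =>
    have h1 : Sf f (n + 1 + 1) = Sf f (n + 1) + f (n + 1) := Sf_succ f (n + 1)
    have h2 : Lh f (n + 1) = Lh f n + (f (n + 1) - 1) := Finset.sum_range_succ _ (n + 1)
    have := hf (n + 1)
    omega

lemma Lh_unbounded {f : ℕ → ℕ} (hf : IsDelay f) (hub : ¬ BoundedDelay f) :
    ∀ c, ∃ N, c ≤ Lh f N := by
  have h2 : ∀ N, ∃ i, N ≤ i ∧ 2 ≤ f i := by
    intro N
    by_contra h
    push_neg at h
    exact hub ⟨N, fun i hi => by have := hf i; have := h i hi; omega⟩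
  intro c
  induction c with
  | zero => exact ⟨0, Nat.zero_le _⟩
  | succ c ih =>
    obtain ⟨N, hN⟩ := ih
    obtain ⟨i, hiN, hfi⟩ := h2 (N + 1)
    obtain ⟨k, rfl⟩ : ∃ k, i = k + 1 := ⟨i - 1, by omega⟩
    refine ⟨k + 1, ?_⟩
    have hm : Lh f N ≤ Lh f k := Lh_mono f (by omega)
    have hs : Lh f (k + 1) = Lh f k + (f (k + 1) - 1) := Finset.sum_range_succ _ (k + 1)
    omega

/-- `findGreatest` only depends on the predicate below the bound. -/
lemma findGreatest_congr {P Q : ℕ → Prop} [DecidablePred P] [DecidablePred Q]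
    {b : ℕ} (h : ∀ n, n ≤ b → (P n ↔ Q n)) :
    Nat.findGreatest P b = Nat.findGreatest Q b := by
  induction b with
  | zero => rfl
  | succ n ih =>
    rw [Nat.findGreatest_succ, Nat.findGreatest_succ]
    by_cases hp : P (n + 1)
    · rw [if_pos hp, if_pos ((h _ le_rfl).1 hp)]
    · rw [if_neg hp, if_neg (fun hq => hp ((h _ le_rfl).2 hq)),
        ih (fun m hm => h m (by omega))]

/-- The predicate underlying `runLen`: there is a run of `r` bits after position `p`,
entirely inside the revealed prefix of length `Sf f (p+1)`. -/
def RunP (f : ℕ → ℕ) (α : ℕ → InL) (p r : ℕ) : Prop :=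
  p + r < Sf f (p + 1) ∧ ∀ j, 1 ≤ j → j ≤ r → IsBit (α (p + j))

/-- Length of the maximal bit-run after position `p` within Player O's lookahead at
round `p`. -/
noncomputable def runLen (f : ℕ → ℕ) (α : ℕ → InL) (p : ℕ) : ℕ :=
  Nat.findGreatest (RunP f α p) (Sf f (p + 1))

/-- Position `p` starts a committed output block. -/
def isStart (f : ℕ → ℕ) (α : ℕ → InL) (p : ℕ) : Prop :=
  α p = .hash ∧ 1 ≤ runLen f α p

lemma runLen_spec (f : ℕ → ℕ) (α : ℕ → InL) (p : ℕ) (h : 1 ≤ runLen f α p) :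
    RunP f α p (runLen f α p) :=
  Nat.findGreatest_of_ne_zero rfl (by omega)

lemma le_runLen (f : ℕ → ℕ) (α : ℕ → InL) {p r : ℕ} (hr : RunP f α p r) :
    r ≤ runLen f α p :=
  Nat.le_findGreatest (by have := hr.1; omega) hr

lemma runLen_congr {f : ℕ → ℕ} {α α' : ℕ → InL} (p m : ℕ)
    (hpm : Sf f (p + 1) ≤ m) (h : ∀ k, k < m → α k = α' k) :
    runLen f α p = runLen f α' p := by
  apply findGreatest_congr
  intro r _
  unfold RunP
  by_cases hr : p + r < Sf f (p + 1)
  · constructor <;> rintro ⟨h1, h2⟩ <;> refine ⟨h1, fun j hj1 hj2 => ?_⟩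
    · rw [← h (p + j) (by omega)]; exact h2 j hj1 hj2
    · rw [h (p + j) (by omega)]; exact h2 j hj1 hj2
  · constructor <;> rintro ⟨h1, _⟩ <;> exact absurd h1 hr

lemma isStart_congr {f : ℕ → ℕ} {α α' : ℕ → InL} (hf : IsDelay f) (p m : ℕ)
    (hpm : Sf f (p + 1) ≤ m) (h : ∀ k, k < m → α k = α' k) :
    isStart f α p ↔ isStart f α' p := by
  have hp : p < Sf f (p + 1) := lt_of_lt_of_le (Nat.lt_succ_self p) (le_Sf f hf (p + 1))
  unfold isStart
  rw [h p (by omega), runLen_congr p m hpm h]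

/-- The start of the committed block covering position `i` (if any). -/
noncomputable def cover (f : ℕ → ℕ) (α : ℕ → InL) (i : ℕ) : ℕ :=
  Nat.findGreatest (fun p => isStart f α p ∧ i ≤ p + runLen f α p) i

/-- Player O's decision at position `i`, given the input word `α` (of which she has
only read the prefix of length `Sf f (i+1)`). -/
noncomputable def odecide (f : ℕ → ℕ) (α : ℕ → InL) (i : ℕ) : OutL :=
  if isStart f α (cover f α i) ∧ i ≤ cover f α i + runLen f α (cover f α i) then
    if i = cover f α i ∨ i = cover f α i + runLen f α (cover f α i) then
      bitOut (bitVal (α (cover f α i + runLen f α (cover f α i))))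
    else .star
  else .star

lemma cover_congr {f : ℕ → ℕ} {α α' : ℕ → InL} (hf : IsDelay f) {i : ℕ}
    (h : ∀ k, k < Sf f (i + 1) → α k = α' k) :
    cover f α i = cover f α' i := by
  apply findGreatest_congr
  intro p hp
  have hpm : Sf f (p + 1) ≤ Sf f (i + 1) := Sf_mono f (by omega)
  rw [runLen_congr p _ hpm h, isStart_congr hf p _ hpm h]

lemma odecide_congr {f : ℕ → ℕ} {α α' : ℕ → InL} (hf : IsDelay f) {i : ℕ}
    (h : ∀ k, k < Sf f (i + 1) → α k = α' k) :
    odecide f α i = odecide f α' i := by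
  have hc : cover f α i = cover f α' i := cover_congr hf h
  have hci : cover f α i ≤ i := Nat.findGreatest_le i
  have hpm : Sf f (cover f α i + 1) ≤ Sf f (i + 1) := Sf_mono f (by omega)
  have hr : runLen f α (cover f α i) = runLen f α' (cover f α i) :=
    runLen_congr _ _ hpm h
  have hsi : isStart f α (cover f α i) ↔ isStart f α' (cover f α i) :=
    isStart_congr hf _ _ hpm h
  unfold odecide
  rw [← hc, ← hr]
  by_cases hg : isStart f α (cover f α i) ∧ i ≤ cover f α i + runLen f α (cover f α i)
  · have hP := runLen_spec f α (cover f α i) hg.1.2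
    rw [h _ (lt_of_lt_of_le hP.1 hpm)]
    exact if_congr (and_congr_left' hsi) rfl rfl
  · rw [if_neg hg, if_neg (fun hg' => hg ⟨hsi.2 hg'.1, hg'.2⟩)]

/-- Committed blocks cannot overlap: the covering start of a position is unique. -/
lemma cover_unique_aux {f : ℕ → ℕ} {α : ℕ → InL} {p q i : ℕ} (hq : q < p) (hpi : p ≤ i)
    (sp : isStart f α p) (sq : isStart f α q) (cq : i ≤ q + runLen f α q) : False := by
  have hP := runLen_spec f α q sq.2
  have hbit := hP.2 (p - q) (by omega) (by omega)
  rw [Nat.add_sub_cancel' (le_of_lt hq), sp.1] at hbit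
  exact not_isBit_hash hbit

lemma cover_eq {f : ℕ → ℕ} (α : ℕ → InL) {p i : ℕ} (hpi : p ≤ i)
    (sp : isStart f α p) (cp : i ≤ p + runLen f α p) :
    cover f α i = p := by
  have hle : p ≤ cover f α i :=
    Nat.le_findGreatest hpi ⟨sp, cp⟩
  rcases Nat.lt_or_ge p (cover f α i) with hlt | hge
  · exfalso
    have hc0 : cover f α i ≠ 0 := by omega
    have hQ : isStart f α (cover f α i) ∧ i ≤ cover f α i + runLen f α (cover f α i) :=
      Nat.findGreatest_of_ne_zero rfl hc0
    exact cover_unique_aux hlt (Nat.findGreatest_le i) hQ.1 sp cp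
  · omega

/-- Main correctness of the strategy at a committed block. -/
lemma odecide_block (f : ℕ → ℕ) (α : ℕ → InL) (p : ℕ) (hs : isStart f α p) :
    OutputBlockAt (fun n => (α n, odecide f α n)) p (runLen f α p + 1) := by
  have hP : RunP f α p (runLen f α p) := runLen_spec f α p hs.2
  have hr1 : 1 ≤ runLen f α p := hs.2
  have key : ∀ i, p ≤ i → i ≤ p + runLen f α p →
      odecide f α i =
        if i = p ∨ i = p + runLen f α p then bitOut (bitVal (α (p + runLen f α p)))
        else .star := by
    intro i h1 h2
    have hc : cover f α i = p := cover_eq α h1 hs h2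
    unfold odecide
    rw [hc, if_pos ⟨hs, h2⟩]
  refine ⟨by omega, bitVal (α (p + runLen f α p)), ?_, ?_, ?_, ?_⟩
  · exact hs.1
  · show odecide f α p = _
    rw [key p le_rfl (by omega), if_pos (Or.inl rfl)]
  · intro j hj1 hj2
    simp only [Nat.add_sub_cancel] at hj2
    constructor
    · exact hP.2 j hj1 (by omega)
    · show odecide f α (p + j) = _
      rw [key (p + j) (by omega) (by omega), if_neg (by omega)]
  · simp only [Nat.add_sub_cancel]
    have hbit : IsBit (α (p + runLen f α p)) := hP.2 _ hr1 le_rfl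
    have hout : odecide f α (p + runLen f α p) = bitOut (bitVal (α (p + runLen f α p))) := by
      rw [key (p + runLen f α p) (by omega) le_rfl, if_pos (Or.inr rfl)]
    refine Prod.ext ?_ ?_
    · show α (p + runLen f α p) = bitIn (bitVal (α (p + runLen f α p)))
      exact (bitIn_bitVal hbit).symm
    · exact hout

/-- Pigeonhole: infinitely many `#`s and arbitrarily long input blocks yield arbitrarily
long input blocks at arbitrarily late positions. -/
lemma blocks_far (α : ℕ → InL)
    (hhash : ∀ N, ∃ i, N ≤ i ∧ α i = .hash)
    (hblocks : ∀ n, ∃ i m, n ≤ m ∧ InputBlockAt α i m) :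
    ∀ N n, ∃ p M, N ≤ p ∧ n ≤ M ∧ InputBlockAt α p M := by
  intro N n
  by_contra hcon
  push_neg at hcon
  have hw : ∀ k : ℕ, ∃ p M, n + k ≤ M ∧ InputBlockAt α p M := fun k => by
    obtain ⟨i, m, hm, hb⟩ := hblocks (n + k); exact ⟨i, m, hm, hb⟩
  choose p M hM hB using hw
  have hpN : ∀ k, p k < N := by
    intro k
    by_contra h
    exact hcon (p k) (M k) (by omega) (by have := hM k; omega) (hB k)
  obtain ⟨y, hy⟩ := Finite.exists_infinite_fiber (fun k => (⟨p k, hpN k⟩ : Fin N))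
  have hyi : ((fun k => (⟨p k, hpN k⟩ : Fin N)) ⁻¹' {y}).Infinite :=
    Set.infinite_coe_iff.mp hy
  have hbits : ∀ j, 1 ≤ j → IsBit (α (y.val + j)) := by
    intro j hj
    obtain ⟨k, hk, hk2⟩ := hyi.exists_notMem_finset (Finset.range (j + 1))
    have hkj : j < k := by simp only [Finset.mem_range] at hk2; omega
    have hpk : p k = y.val := congrArg Fin.val (Set.mem_singleton_iff.mp hk)
    have hjM : j < M k := by have := hM k; omega
    have := (hB k).2.2 j hj hjM
    rwa [hpk] at this
  obtain ⟨q, hq1, hq2⟩ := hhash (y.val + 1)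
  have := hbits (q - y.val) (by omega)
  rw [Nat.add_sub_cancel' (by omega), hq2] at this
  exact not_isBit_hash this

/-! ### Relating lists and infinite words -/

lemma listPrefix_prefix {A : Type*} (u : ℕ → List A) {k k' : ℕ} (h : k ≤ k') :
    listPrefix u k <+: listPrefix u k' := by
  induction h with
  | refl => exact List.prefix_refl _
  | step _ ih => exact ih.trans (List.prefix_append _ _)

lemma flattenInf_eq {A : Type*} [Nonempty A] (u : ℕ → List A) {n k : ℕ}
    (h : n < (listPrefix u k).length) (d : A) :
    flattenInf u n = (listPrefix u k).getD n d := by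
  have hex : ∃ k, n < (listPrefix u k).length := ⟨k, h⟩
  have h2 : n < (listPrefix u hex.choose).length := hex.choose_spec
  rw [flattenInf]
  rw [dif_pos hex]
  rw [List.getD_eq_getElem _ _ h2, List.getD_eq_getElem _ _ h]
  rcases le_total hex.choose k with hle | hle
  · exact (listPrefix_prefix u hle).getElem h2
  · exact ((listPrefix_prefix u hle).getElem h).symm

lemma listPrefix_length {A : Type*} (u : ℕ → List A) (k : ℕ) :
    (listPrefix u k).length = ∑ j ∈ Finset.range k, (u j).length := by
  induction k with
  | zero => simp [listPrefix]
  | succ m ih => simp [listPrefix, ih, Finset.sum_range_succ]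

/-- Recover the round number from the length of the revealed prefix. -/
noncomputable def roundOf (f : ℕ → ℕ) (m : ℕ) : ℕ :=
  if h : ∃ i, Sf f (i + 1) = m then h.choose else 0

lemma roundOf_eq {f : ℕ → ℕ} (hf : IsDelay f) (i : ℕ) : roundOf f (Sf f (i + 1)) = i := by
  rw [roundOf]
  have hex : ∃ j, Sf f (j + 1) = Sf f (i + 1) := ⟨i, rfl⟩
  rw [dif_pos hex]
  have hspec := hex.choose_spec
  have := (Sf_strictMono f hf).injective hspec
  omega

end BlockProof

open BlockProof in
/-- Player O wins the delay game with the block language as winning condition for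
every unbounded delay function. -/
theorem o_wins_blockLang_unbounded (f : ℕ → ℕ) (hf : IsDelay f) (hub : ¬ BoundedDelay f) :
    OWinsDelay f BlockLang := by
  refine ⟨fun w => odecide f (fun k => w.getD k .hash) (roundOf f w.length), ?_⟩
  intro u v hu hv
  set α : ℕ → InL := flattenInf u with hα
  have hlen : ∀ k, (listPrefix u k).length = Sf f k := by
    intro k
    rw [listPrefix_length]
    exact Finset.sum_congr rfl fun j _ => hu j
  have hv' : ∀ i, v i = odecide f α i := by
    intro i
    rw [hv i]
    have hl : (listPrefix u (i + 1)).length = Sf f (i + 1) := hlen (i + 1)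
    simp only [hl, roundOf_eq hf]
    apply odecide_congr hf
    intro k hk
    rw [← hl] at hk
    exact (flattenInf_eq u hk .hash).symm
  simp only [BlockLang, Set.mem_setOf_eq]
  intro hpre n
  obtain ⟨hhash, hblocks⟩ := hpre
  have hhash' : ∀ N, ∃ i, N ≤ i ∧ α i = .hash := by
    intro N
    obtain ⟨i, h1, h2⟩ := hhash N
    exact ⟨i, h1, h2⟩
  have hblocks' : ∀ m, ∃ i M, m ≤ M ∧ InputBlockAt α i M := by
    intro m
    obtain ⟨i, M, h1, h2⟩ := hblocks m
    exact ⟨i, M, h1, h2⟩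
  obtain ⟨N, hN⟩ := Lh_unbounded hf hub (max n 2 - 1)
  obtain ⟨p, M, hpN, hM, hblk⟩ := blocks_far α hhash' hblocks' N (max n 2)
  have hrun : max n 2 - 1 ≤ runLen f α p := by
    apply le_runLen
    constructor
    · have h1 : Sf f (p + 1) = (p + 1) + Lh f p := Sf_eq_Lh hf p
      have h2 : Lh f N ≤ Lh f p := Lh_mono f hpN
      omega
    · intro j hj1 hj2
      exact hblk.2.2 j hj1 (by omega)
  have hs : isStart f α p := ⟨hblk.2.1, by omega⟩
  refine ⟨p, runLen f α p + 1, by omega, ?_⟩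
  have hb := odecide_block f α p hs
  have hγ : (fun k => (flattenInf u k, v k)) = fun k => (α k, odecide f α k) := by
    funext k
    rw [hv' k]
  rw [hγ]
  exact hb
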